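/- arXiv:1504.06835 — 2 statements merged into one kernel-verified Lean document; each statement's English description precedes it below -/
import Mathlib

section
/- Let X and Y be metric spaces, let x ∈ X, ρ > 0, and let φ : X → Y be a map. Assume: (1) φ is continuous on the closed ball B̄(x,3ρ); (2) the closed ball B̄(x,3ρ) is compact; (3) the image φ(B(x,3ρ)) of the open ball B(x,3ρ) is an open subset of Y; (4) the open ball B(φ(x),2ρ) is connected; and (5) dist(φ(x),φ(y)) > 2ρ for every y ∈ X with dist(x,y) = 3ρ. Then B(φ(x),2ρ) ⊆ φ(B(x,3ρ)). -/
/-- Ball-covering claim: if `φ` is continuous on the compact closed ball `B̄(x,3ρ)`, maps the open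
ball `B(x,3ρ)` onto an open set, the ball `B(φ x, 2ρ)` is connected, and `φ` sends every point at
distance exactly `3ρ` from `x` to a point at distance more than `2ρ` from `φ x`, then
`B(φ x, 2ρ) ⊆ φ(B(x,3ρ))`. -/
theorem stmt_2 {X Y : Type*} [MetricSpace X] [MetricSpace Y] (x : X) (ρ : ℝ) (hρ : 0 < ρ)
    (φ : X → Y)
    (hcont : ContinuousOn φ (Metric.closedBall x (3 * ρ)))
    (hcompact : IsCompact (Metric.closedBall x (3 * ρ)))
    (hopen : IsOpen (φ '' Metric.ball x (3 * ρ)))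
    (hconn : IsConnected (Metric.ball (φ x) (2 * ρ)))
    (hbd : ∀ y : X, dist x y = 3 * ρ → 2 * ρ < dist (φ x) (φ y)) :
    Metric.ball (φ x) (2 * ρ) ⊆ φ '' Metric.ball x (3 * ρ) := by
  set U := φ '' Metric.ball x (3 * ρ) with hU
  set K := φ '' Metric.closedBall x (3 * ρ) with hK
  have hKcomp : IsCompact K := hcompact.image_of_continuousOn hcont
  have hV : IsOpen Kᶜ := hKcomp.isClosed.isOpen_compl
  have hdisj : Disjoint U Kᶜ := by
    refine Set.disjoint_left.mpr ?_
    rintro y ⟨z, hz, rfl⟩ hyc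
    exact hyc ⟨z, Metric.ball_subset_closedBall hz, rfl⟩
  have hsub : Metric.ball (φ x) (2 * ρ) ⊆ U ∪ Kᶜ := by
    intro y hy
    by_cases hyK : y ∈ K
    · obtain ⟨z, hz, rfl⟩ := hyK
      rcases lt_or_eq_of_le (Metric.mem_closedBall'.mp hz) with h | h
      · exact Or.inl ⟨z, Metric.mem_ball'.mpr h, rfl⟩
      · exact absurd (Metric.mem_ball'.mp hy) (not_lt.mpr (hbd z h).le)
    · exact Or.inr hyK
  rcases hconn.isPreconnected.subset_or_subset hopen hV hdisj hsub with h | h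
  · exact h
  · exfalso
    have hx : φ x ∈ Metric.ball (φ x) (2 * ρ) := by
      simp only [Metric.mem_ball, dist_self]
      linarith
    exact h hx ⟨x, Metric.mem_closedBall_self (by linarith), rfl⟩
end

section
/- Let M be a second-countable Hausdorff C^∞ manifold without boundary of dimension n, and let E = ℓ²(ℕ,ℝ) be the separable infinite-dimensional real Hilbert space. Then there exists a map f : M → E that is C^∞, is a topological embedding (a homeomorphism onto its image), and is an immersion (its differential at every point of M is injective). -/
/-!
Cover `M` by countably many smooth bump functions `fᵢ`, each supported in the chart `φᵢ` at its
centre, and send `x` to the family `(fᵢ x, fᵢ x • φᵢ x)ᵢ`, written on pairwise disjoint blocks of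
coordinates of `ℓ²`. Local finiteness of the cover makes this map smooth. Where `fᵢ ≠ 0`,
dividing the `φᵢ`-block by the `fᵢ`-coordinate recovers the chart `φᵢ`: this local left inverse,
smooth near the image, shows at once that the map is injective, a homeomorphism onto its image
and an immersion.
-/

open scoped Manifold ContDiff lp
open Function Set Filter Topology

theorem LocallyFinite.comp_fst {ι K X : Type*} [TopologicalSpace X] [Finite K] {s : ι → Set X}
    (hs : LocallyFinite s) : LocallyFinite fun j : ι × K => s j.1 := fun x =>
  let ⟨t, ht, hfin⟩ := hs x
  ⟨t, ht, (hfin.prod finite_univ).subset fun _ hj => ⟨hj, trivial⟩⟩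

theorem Topology.IsEmbedding.of_forall_eventually_leftInverse {X Y : Type*} [TopologicalSpace X]
    [TopologicalSpace Y] {F : X → Y} (hF : Continuous F)
    (h : ∀ x, ∃ g : Y → X, ContinuousAt g (F x) ∧ ∀ᶠ y in comap F (𝓝 (F x)), g (F y) = y) :
    IsEmbedding F := by
  choose g hg hgF using h
  have hfiber : ∀ x y, F y = F x → g x (F y) = y := fun x =>
    (eventually_comap.mp (hgF x)).self_of_nhds
  refine ⟨isInducing_iff_nhds.mpr fun x => le_antisymm (hF.tendsto x).le_comap ?_, ?_⟩
  · have := (hg x).tendsto.comp (tendsto_comap (f := F))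
    rw [hfiber x x rfl] at this
    exact tendsto_id'.mp (this.congr' (hgF x))
  · intro x y hxy
    rw [← hfiber x x rfl, ← hfiber x y hxy.symm, hxy]

theorem injective_mfderiv_of_comp_eventuallyEq_extChartAt {𝕜 : Type*}
    [NontriviallyNormedField 𝕜] {E H M E' : Type*} [NormedAddCommGroup E] [NormedSpace 𝕜 E]
    [TopologicalSpace H] {I : ModelWithCorners 𝕜 E H} [TopologicalSpace M] [ChartedSpace H M]
    [IsManifold I 1 M] [NormedAddCommGroup E'] [NormedSpace 𝕜 E'] {F : M → E'} {Ψ : E' → E}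
    {x c : M} (hF : MDifferentiableAt I 𝓘(𝕜, E') F x) (hΨ : DifferentiableAt 𝕜 Ψ (F x))
    (hx : x ∈ (chartAt H c).source) (hΨF : Ψ ∘ F =ᶠ[𝓝 x] extChartAt I c) :
    Injective (mfderiv I 𝓘(𝕜, E') F x) := by
  have hcomp := hΨ.hasFDerivAt.hasMFDerivAt.comp x hF.hasMFDerivAt
  have hchart := (hasMFDerivAt_extChartAt hx).congr_of_eventuallyEq hΨF
  intro v w hvw
  apply (mdifferentiable_chart c).mfderiv_injective hx
  rw [← hasMFDerivAt_unique hcomp hchart]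
  exact congrArg (fderiv 𝕜 Ψ (F x)) hvw

theorem lp.finsum_single_apply {J α E : Type*} [DecidableEq α] [NormedAddCommGroup E]
    {p : ENNReal} {κ : J → α} (hκ : Injective κ) {v : J → E} (hv : (support v).Finite) (j : J) :
    (∑ᶠ i, lp.single (E := fun _ : α => E) p (κ i) (v i)) (κ j) = v j := by
  have hsupp : (support fun i => lp.single (E := fun _ : α => E) p (κ i) (v i)) ⊆ hv.toFinset :=
    fun i hi => hv.mem_toFinset.mpr fun hvi => hi (by simp [hvi])
  rw [finsum_eq_sum_of_support_subset _ hsupp, lp.coeFn_sum, Finset.sum_apply]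
  simp only [lp.single_apply, Pi.single_apply]
  rw [Finset.sum_eq_single j (fun i _ hij => if_neg (hκ.ne hij.symm)) fun hj => ?_, if_pos rfl]
  simpa using hj

theorem lp.contMDiff_finsum_single {E H M G J α : Type*} [NormedAddCommGroup E]
    [NormedSpace ℝ E] [TopologicalSpace H] {I : ModelWithCorners ℝ E H} [TopologicalSpace M]
    [ChartedSpace H M] [NormedAddCommGroup G] [NormedSpace ℝ G] [DecidableEq α] {p : ENNReal}
    [Fact (1 ≤ p)] {n : WithTop ℕ∞} {g : J → M → G} (hg : ∀ j, ContMDiff I 𝓘(ℝ, G) n (g j))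
    (hfin : LocallyFinite fun j => support (g j)) (κ : J → α) :
    ContMDiff I 𝓘(ℝ, lp (fun _ : α => G) p) n fun x =>
      ∑ᶠ j, lp.single (E := fun _ : α => G) p (κ j) (g j x) :=
  contMDiff_finsum
    (fun j => (lp.singleContinuousLinearMap ℝ (fun _ : α => G) p (κ j)).contMDiff.comp (hg j))
    (hfin.subset fun j x hx hgx => hx (by simp [hgx]))

namespace SmoothBumpCovering

variable {E H M ι K : Type*} [NormedAddCommGroup E] [NormedSpace ℝ E] (b : Module.Basis K ℝ E)
  {κ : ι × Option K → ℕ}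

section chartOfL2

variable [Fintype K]

variable (κ) in
noncomputable def chartOfL2 (i : ι) (w : ℓ²(ℕ, ℝ)) : E :=
  (w (κ (i, none)))⁻¹ • ∑ k, w (κ (i, some k)) • b k

theorem differentiableAt_chartOfL2 {i : ι} {w : ℓ²(ℕ, ℝ)} (hw : w (κ (i, none)) ≠ 0) :
    DifferentiableAt ℝ (chartOfL2 b κ i) w :=
  ((lp.evalCLM ℝ (fun _ : ℕ => ℝ) 2 _).differentiableAt.inv hw).smul <|
    DifferentiableAt.fun_sum fun k _ =>
      (lp.evalCLM ℝ (fun _ : ℕ => ℝ) 2 _).differentiableAt.smul_const (b k)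

end chartOfL2

variable [FiniteDimensional ℝ E] [TopologicalSpace H] {I : ModelWithCorners ℝ E H}
  [TopologicalSpace M] [ChartedSpace H M] (f : SmoothBumpCovering ι I M)

noncomputable def coord : ι × Option K → M → ℝ
  | (i, none) => f i
  | (i, some k) => fun x => f i x • b.coord k (extChartAt I (f.c i) x)

theorem support_coord_subset : ∀ j, support (f.coord b j) ⊆ support (f j.1)
  | (_, none) => subset_rfl
  | (i, some _) => support_smul_subset_left (f i) _

theorem contMDiff_coord [T2Space M] [IsManifold I ∞ M] :
    ∀ j, ContMDiff I 𝓘(ℝ) ∞ (f.coord b j)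
  | (i, none) => (f i).contMDiff
  | (i, some k) => (f i).contMDiff_smul <|
      (LinearMap.toContinuousLinearMap (b.coord k)).contMDiff.comp_contMDiffOn
        contMDiffOn_extChartAt

variable (κ) in
noncomputable def toL2 (x : M) : ℓ²(ℕ, ℝ) := ∑ᶠ j, lp.single 2 (κ j) (f.coord b j x)

variable [Fintype K]

theorem locallyFinite_support_coord : LocallyFinite fun j => support (f.coord b j) :=
  f.locallyFinite.comp_fst.subset (f.support_coord_subset b)

variable (κ) in
theorem contMDiff_toL2 [T2Space M] [IsManifold I ∞ M] :
    ContMDiff I 𝓘(ℝ, ℓ²(ℕ, ℝ)) ∞ (f.toL2 b κ) :=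
  lp.contMDiff_finsum_single (f.contMDiff_coord b) (f.locallyFinite_support_coord b) κ

theorem toL2_apply (hκ : Injective κ) (x : M) (j : ι × Option K) :
    f.toL2 b κ x (κ j) = f.coord b j x :=
  lp.finsum_single_apply hκ ((f.locallyFinite_support_coord b).point_finite x) j

theorem chartOfL2_toL2 (hκ : Injective κ) {i : ι} {y : M} (hy : f i y ≠ 0) :
    chartOfL2 b κ i (f.toL2 b κ y) = extChartAt I (f.c i) y := by
  simp only [chartOfL2, f.toL2_apply b hκ, coord, smul_eq_mul, mul_smul, ← Finset.smul_sum,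
    inv_smul_smul₀ hy, Module.Basis.coord_apply, b.sum_repr]

theorem isEmbedding_toL2 [T2Space M] [IsManifold I ∞ M] (hκ : Injective κ) :
    IsEmbedding (f.toL2 b κ) := by
  refine .of_forall_eventually_leftInverse (f.contMDiff_toL2 b κ).continuous fun x => ?_
  set i := f.ind x (mem_univ x)
  have hx : f i x ≠ 0 := f.mem_support_ind x (mem_univ x)
  have hsrc : ∀ {y}, f i y ≠ 0 → y ∈ (extChartAt I (f.c i)).source := fun hy => by
    rw [extChartAt_source]; exact (f i).support_subset_source hy
  refine ⟨(extChartAt I (f.c i)).symm ∘ chartOfL2 b κ i, ?_, ?_⟩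
  · have hFx : f.toL2 b κ x (κ (i, none)) ≠ 0 := by rwa [f.toL2_apply b hκ]
    exact (continuousAt_extChartAt_symm' (hsrc hx)).comp_of_eq
      (differentiableAt_chartOfL2 b hFx).continuousAt (f.chartOfL2_toL2 b hκ hx)
  · have hopen : IsOpen {w : ℓ²(ℕ, ℝ) | w (κ (i, none)) ≠ 0} :=
      isOpen_ne_fun (lp.evalCLM ℝ (fun _ : ℕ => ℝ) 2 _).continuous continuous_const
    filter_upwards
      [tendsto_comap.eventually (hopen.mem_nhds ((f.toL2_apply b hκ x _).trans_ne hx))] with y hy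
    rw [f.toL2_apply b hκ] at hy
    rw [comp_apply, f.chartOfL2_toL2 b hκ hy, (extChartAt I (f.c i)).left_inv (hsrc hy)]

theorem injective_mfderiv_toL2 [T2Space M] [IsManifold I ∞ M] (hκ : Injective κ) (x : M) :
    Injective (mfderiv I 𝓘(ℝ, ℓ²(ℕ, ℝ)) (f.toL2 b κ) x) := by
  set i := f.ind x (mem_univ x)
  have hx : f i x ≠ 0 := f.mem_support_ind x (mem_univ x)
  have hFx : f.toL2 b κ x (κ (i, none)) ≠ 0 := by rwa [f.toL2_apply b hκ]
  refine injective_mfderiv_of_comp_eventuallyEq_extChartAt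
    ((f.contMDiff_toL2 b κ).mdifferentiableAt (by simp)) (differentiableAt_chartOfL2 b hFx)
    ((f i).support_subset_source hx) ?_
  filter_upwards [(f i).isOpen_support.mem_nhds hx] with y hy using f.chartOfL2_toL2 b hκ hy

end SmoothBumpCovering

/-- Every second-countable Hausdorff `C^∞` manifold without boundary of dimension `n` admits a
`C^∞` map into the separable Hilbert space `ℓ²(ℕ,ℝ)` that is a topological embedding and
an immersion. -/
theorem stmt_4 (n : ℕ) {M : Type*} [TopologicalSpace M] [T2Space M]
    [SecondCountableTopology M] [ChartedSpace (EuclideanSpace ℝ (Fin n)) M]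
    [IsManifold (𝓡 n) (⊤ : ℕ∞) M] :
    ∃ f : M → lp (fun _ : ℕ => ℝ) 2,
      ContMDiff (𝓡 n) 𝓘(ℝ, lp (fun _ : ℕ => ℝ) 2) (⊤ : ℕ∞) f ∧
      Topology.IsEmbedding f ∧
      ∀ p : M, Function.Injective (mfderiv (𝓡 n) 𝓘(ℝ, lp (fun _ : ℕ => ℝ) 2) f p) := by
  have : LocallyCompactSpace M := Manifold.locallyCompact_of_finiteDimensional (𝓡 n)
  obtain ⟨ι, f, -⟩ := SmoothBumpCovering.exists_isSubordinate (𝓡 n) isClosed_univ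
    fun (x : M) _ => univ_mem
  have : Countable ι :=
    countable_univ_iff.mp (f.locallyFinite.countable_univ fun i => (f i).nonempty_support)
  obtain ⟨κ, hκ⟩ := Countable.exists_injective_nat (ι × Option (Fin n))
  let b := Module.finBasisOfFinrankEq ℝ (EuclideanSpace ℝ (Fin n)) finrank_euclideanSpace_fin
  exact ⟨f.toL2 b κ, f.contMDiff_toL2 b κ, f.isEmbedding_toL2 b hκ, f.injective_mfderiv_toL2 b hκ⟩
end
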